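/- For x ≠ 0 with j-values nonzero, the universal mock theta function satisfies g(x,q) = Σ_{n≥0} q^{n(n+1)} / ((x;q)_{n+1} (q/x;q)_{n+1}). -/

import Mathlib

open Complex

noncomputable def qp (q x : ℂ) (n : ℕ) : ℂ := ∏ i ∈ Finset.range n, (1 - q ^ i * x)

noncomputable def qpi (q x : ℂ) : ℂ := ∏' i : ℕ, (1 - q ^ i * x)

noncomputable def jj (q z : ℂ) : ℂ := qpi q z * qpi q (q / z) * qpi q q

noncomputable def mAL (x q z : ℂ) : ℂ :=
  (jj q z)⁻¹ * ∑' r : ℤ, (-1 : ℂ) ^ r * q ^ (r * (r - 1) / 2) * z ^ r / (1 - q ^ (r - 1) * x * z)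

noncomputable def gUniv (x q : ℂ) : ℂ :=
  x⁻¹ * (-1 + ∑' n : ℕ, q ^ (n ^ 2) / (qp q x (n + 1) * qp q (q / x) n))

noncomputable def qpz (q x : ℂ) (n : ℤ) : ℂ := qpi q x / qpi q (x * q ^ n)

noncomputable def gauss (q : ℂ) (n : ℕ) (m : ℤ) : ℂ :=
  if 0 ≤ m ∧ m ≤ (n : ℤ) then qp q q n / (qp q q m.toNat * qp q q (n - m.toNat)) else 0

/-!
Put `c n = q ^ (n ^ 2) / ((x; q)_n (q/x; q)_n)`. The `n`-th summand of the series defining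
`g(x, q)`, minus `x` times the `n`-th summand of the claimed series, is `c n - c (n + 1)`.
Since `(x; q)_n` and `(q/x; q)_n` converge to nonzero infinite products, all three series
converge absolutely and `c n → 0`, so the difference of the two series telescopes to `c 0 = 1`.
-/

open Filter Topology

section Telescoping

variable {G : Type*} [AddCommGroup G] [TopologicalSpace G] [IsTopologicalAddGroup G] [T2Space G]

theorem tsum_sub_tsum_of_telescoping {a b c : ℕ → G} (ha : Summable a) (hb : Summable b)
    (hc : Tendsto c atTop (𝓝 0)) (habc : ∀ n, a n - b n = c n - c (n + 1)) :
    ∑' n, a n - ∑' n, b n = c 0 := by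
  have hpartial : ∀ n, ∑ i ∈ Finset.range n, (a i - b i) = c 0 - c n := fun n => by
    simp only [habc, Finset.sum_range_sub']
  refine tendsto_nhds_unique (ha.hasSum.sub hb.hasSum).tendsto_sum_nat ?_
  simpa [hpartial] using (tendsto_const_nhds (x := c 0)).sub hc

end Telescoping

theorem summable_pow_div_of_tendsto {𝕜 : Type*} [NormedField 𝕜] [CompleteSpace 𝕜] {q : 𝕜}
    (hq : ‖q‖ < 1) {e : ℕ → ℕ} (he : ∀ n, n ≤ e n) {u : ℕ → 𝕜} {l : 𝕜} (hl : l ≠ 0)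
    (hu : Tendsto u atTop (𝓝 l)) : Summable fun n => q ^ e n / u n := by
  have hpow : Summable fun n => ‖q ^ e n‖ :=
    (summable_geometric_of_lt_one (norm_nonneg q) hq).of_nonneg_of_le (fun _ => norm_nonneg _)
      fun n => by simpa only [norm_pow] using pow_le_pow_of_le_one (norm_nonneg q) hq.le (he n)
  simpa only [div_eq_mul_inv] using
    hpow.mul_tendsto_const (Nat.cofinite_eq_atTop ▸ hu.inv₀ hl)

section QPochhammer

variable {q : ℂ} (x : ℂ)

theorem qp_succ (n : ℕ) : qp q x (n + 1) = qp q x n * (1 - q ^ n * x) :=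
  Finset.prod_range_succ _ n

theorem summable_norm_neg_pow_mul (hq : ‖q‖ < 1) : Summable fun i : ℕ => ‖-(q ^ i * x)‖ := by
  simpa [norm_mul, norm_pow] using
    (summable_geometric_of_lt_one (norm_nonneg q) hq).mul_right ‖x‖

theorem tendsto_qp (hq : ‖q‖ < 1) : Tendsto (qp q x) atTop (𝓝 (qpi q x)) := by
  have := (multipliable_one_add_of_summable (summable_norm_neg_pow_mul x hq)).hasProd
  simp only [← sub_eq_add_neg] at this
  exact this.tendsto_prod_nat

theorem qpi_ne_zero (hq : ‖q‖ < 1) (h : ∀ n, qp q x n ≠ 0) : qpi q x ≠ 0 := by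
  have hfactor : ∀ i, 1 + -(q ^ i * x) ≠ 0 := fun i => by
    have := h (i + 1)
    rw [qp_succ, mul_ne_zero_iff, sub_eq_add_neg] at this
    exact this.2
  simpa only [qpi, ← sub_eq_add_neg] using
    tprod_one_add_ne_zero_of_summable hfactor (summable_norm_neg_pow_mul x hq)

end QPochhammer

theorem gUniv_summand_sub_mul_alt_summand {q x : ℂ} (n : ℕ) (hx : x ≠ 0)
    (hP : qp q x (n + 1) ≠ 0) (hQ : qp q (q / x) (n + 1) ≠ 0) :
    q ^ (n ^ 2) / (qp q x (n + 1) * qp q (q / x) n)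
        - x * (q ^ (n * (n + 1)) / (qp q x (n + 1) * qp q (q / x) (n + 1)))
      = q ^ (n ^ 2) / (qp q x n * qp q (q / x) n)
        - q ^ ((n + 1) ^ 2) / (qp q x (n + 1) * qp q (q / x) (n + 1)) := by
  -- `field_simp` needs the nonvanishing of the last factor of `(q/x; q)_(n+1)` in polynomial form.
  have hfactor : 1 - q ^ n * (q / x) = (x - q ^ (n + 1)) / x := by field_simp; ring
  rw [qp_succ, mul_ne_zero_iff] at hP hQ
  obtain ⟨hPn, hxn⟩ := hP
  obtain ⟨hQn, hqxn⟩ := hQ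
  rw [hfactor, div_ne_zero_iff, pow_succ] at hqxn
  rw [qp_succ, qp_succ, hfactor, show (n + 1) ^ 2 = n ^ 2 + (n + 1) + n by ring,
    show n * (n + 1) = n ^ 2 + n by ring, pow_add, pow_add]
  field_simp [hqxn.1]
  ring

theorem gUniv_alt_general (q x : ℂ) (hq1 : ‖q‖ < 1)
    (hx : x ≠ 0) (hden : ∀ n : ℕ, qp q x n ≠ 0 ∧ qp q (q / x) n ≠ 0) :
    gUniv x q = ∑' n : ℕ, q ^ (n * (n + 1)) / (qp q x (n + 1) * qp q (q / x) (n + 1)) := by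
  have hP := tendsto_qp x hq1
  have hQ := tendsto_qp (q / x) hq1
  have hP' := (tendsto_add_atTop_iff_nat 1).2 hP
  have hQ' := (tendsto_add_atTop_iff_nat 1).2 hQ
  have hPQ : qpi q x * qpi q (q / x) ≠ 0 :=
    mul_ne_zero (qpi_ne_zero x hq1 fun n => (hden n).1) (qpi_ne_zero _ hq1 fun n => (hden n).2)
  have hsq : ∀ n : ℕ, n ≤ n ^ 2 := fun n => Nat.le_self_pow two_ne_zero n
  have hc := summable_pow_div_of_tendsto hq1 hsq hPQ (hP.mul hQ)
  have ha := summable_pow_div_of_tendsto hq1 hsq hPQ (hP'.mul hQ)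
  have hb := summable_pow_div_of_tendsto hq1 (e := fun n => n * (n + 1))
    (fun n => Nat.le_mul_of_pos_right n n.succ_pos) hPQ (hP'.mul hQ')
  have htelescope := tsum_sub_tsum_of_telescoping ha (hb.mul_left x) hc.tendsto_atTop_zero
    fun n => gUniv_summand_sub_mul_alt_summand n hx (hden (n + 1)).1 (hden (n + 1)).2
  have hc0 : q ^ (0 ^ 2) / (qp q x 0 * qp q (q / x) 0) = 1 := by simp [qp]
  rw [tsum_mul_left, hc0] at htelescope
  rw [gUniv]
  field_simp
  linear_combination htelescope

/-- Alternative expression for the universal mock theta function g(x,q). -/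
theorem gUniv_alt (q x : ℂ) (hq0 : 0 < ‖q‖) (hq1 : ‖q‖ < 1)
    (hx : x ≠ 0) (hden : ∀ n : ℕ, qp q x n ≠ 0 ∧ qp q (q / x) n ≠ 0) :
    gUniv x q = ∑' n : ℕ, q ^ (n * (n + 1)) / (qp q x (n + 1) * qp q (q / x) (n + 1)) :=
  gUniv_alt_general q x hq1 hx hden
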